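/- Let λ₁ ≤ λ₂ ≤ λ₃ ≤ λ₄ be real numbers with λ₁ + λ₂ + λ₃ + λ₄ = 0, λ₁·λ₂·λ₃·λ₄ = 0, and suppose that 0 < λ₁³ + λ₂³ + λ₃³ + λ₄³ < (1/√6)·(λ₁² + λ₂² + λ₃² + λ₄²)^{3/2}. Then there exist real numbers λ > μ > 0 such that λ₁ = −λ, λ₂ = −μ, λ₃ = 0 and λ₄ = λ + μ; in particular λ₁ < λ₂ < λ₃ = 0 < λ₄. -/

import Mathlib

/-!
Since the λᵢ sum to zero and one of them vanishes, the cube sum of the other three is three times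
their product. Positivity of this product together with the ordering forces λ₃ = 0 and
λ₁, λ₂ < 0 < λ₄. The only remaining freedom is λ₁ = λ₂ = -μ, λ₄ = 2μ, where the cube sum
6μ³ equals (1/√6)·(6μ²)^{3/2}, which is excluded by the strict upper bound.
-/

lemma add_pow_three_add_pow_three_of_add_eq_zero {R : Type*} [CommRing R] {a b c : R}
    (h : a + b + c = 0) : a ^ 3 + b ^ 3 + c ^ 3 = 3 * a * b * c := by
  rw [show c = -(a + b) by linear_combination h]
  ring

lemma third_eq_zero_of_sum_cubes_pos {l1 l2 l3 l4 : ℝ}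
    (h12 : l1 ≤ l2) (h23 : l2 ≤ l3) (h34 : l3 ≤ l4)
    (hsum : l1 + l2 + l3 + l4 = 0) (hprod : l1 * l2 * l3 * l4 = 0)
    (hpos : 0 < l1 ^ 3 + l2 ^ 3 + l3 ^ 3 + l4 ^ 3) : l3 = 0 := by
  by_contra hl3
  have hl3_pos : 0 < l3 := by
    refine lt_of_le_of_ne ?_ (Ne.symm hl3)
    by_contra! hneg
    have : l1 * l2 * (l3 * l4) < 0 :=
      mul_neg_of_pos_of_neg (mul_pos_of_neg_of_neg (by linarith) (by linarith))
        (mul_neg_of_neg_of_pos hneg (by linarith))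
    linarith [show l1 * l2 * (l3 * l4) = l1 * l2 * l3 * l4 by ring]
  have hl12 : l1 * l2 = 0 := by
    have : l1 * l2 * (l3 * l4) = 0 := by linear_combination hprod
    simpa [hl3_pos.ne', (hl3_pos.trans_le h34).ne'] using this
  rcases mul_eq_zero.mp hl12 with hl1 | hl2
  · linarith
  · have hcubes : l1 ^ 3 + l3 ^ 3 + l4 ^ 3 = 3 * l1 * l3 * l4 :=
      add_pow_three_add_pow_three_of_add_eq_zero (by linarith)
    have : l1 * l3 * l4 ≤ 0 :=
      mul_nonpos_of_nonpos_of_nonneg (mul_nonpos_of_nonpos_of_nonneg (by linarith) hl3_pos.le)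
        (by linarith)
    rw [hl2] at hpos
    linarith

lemma rpow_three_halves {t : ℝ} (ht : 0 ≤ t) : t ^ ((3 : ℝ) / 2) = t * √t := by
  rw [show (3 : ℝ) / 2 = 1 + 1 / 2 by norm_num, Real.rpow_add' ht (by norm_num), Real.rpow_one,
    Real.sqrt_eq_rpow]

lemma one_div_sqrt_six_mul_rpow_three_halves {μ : ℝ} (hμ : 0 ≤ μ) :
    1 / √6 * (6 * μ ^ 2) ^ ((3 : ℝ) / 2) = 6 * μ ^ 3 := by
  have h6 : (0 : ℝ) < √6 := by positivity
  rw [rpow_three_halves (by positivity), Real.sqrt_mul (by norm_num), Real.sqrt_sq hμ]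
  field_simp

theorem f3_positive_case (l1 l2 l3 l4 : ℝ)
    (h12 : l1 ≤ l2) (h23 : l2 ≤ l3) (h34 : l3 ≤ l4)
    (hsum : l1 + l2 + l3 + l4 = 0) (hprod : l1 * l2 * l3 * l4 = 0)
    (hpos : 0 < l1 ^ 3 + l2 ^ 3 + l3 ^ 3 + l4 ^ 3)
    (hupp : l1 ^ 3 + l2 ^ 3 + l3 ^ 3 + l4 ^ 3 <
      (1 / Real.sqrt 6) * (l1 ^ 2 + l2 ^ 2 + l3 ^ 2 + l4 ^ 2) ^ ((3 : ℝ) / 2)) :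
    (∃ l m : ℝ, m < l ∧ 0 < m ∧ l1 = -l ∧ l2 = -m ∧ l3 = 0 ∧ l4 = l + m) ∧
      (l1 < l2 ∧ l2 < l3 ∧ l3 = 0 ∧ 0 < l4) := by
  obtain rfl : l3 = 0 := third_eq_zero_of_sum_cubes_pos h12 h23 h34 hsum hprod hpos
  have hcubes : l1 ^ 3 + l2 ^ 3 + l4 ^ 3 = 3 * l1 * l2 * l4 :=
    add_pow_three_add_pow_three_of_add_eq_zero (by linarith)
  have hl2 : l2 < 0 := by
    refine lt_of_le_of_ne h23 fun h => ?_
    subst h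
    have : l1 ^ 3 + 0 ^ 3 + 0 ^ 3 + l4 ^ 3 = 0 := by linear_combination hcubes
    linarith
  have hl4 : 0 < l4 := by nlinarith [mul_pos_of_neg_of_neg (h12.trans_lt hl2) hl2]
  have hl12 : l1 < l2 := by
    refine lt_of_le_of_ne h12 fun h => ?_
    subst h
    obtain rfl : l4 = 2 * -l1 := by linarith
    rw [show l1 ^ 3 + l1 ^ 3 + 0 ^ 3 + (2 * -l1) ^ 3 = 6 * (-l1) ^ 3 by ring,
      show l1 ^ 2 + l1 ^ 2 + 0 ^ 2 + (2 * -l1) ^ 2 = 6 * (-l1) ^ 2 by ring,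
      one_div_sqrt_six_mul_rpow_three_halves (by linarith)] at hupp
    exact lt_irrefl _ hupp
  exact ⟨⟨-l1, -l2, by linarith, by linarith, by ring, by ring, rfl, by linarith⟩,
    hl12, hl2, rfl, hl4⟩
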